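/- arXiv:1305.5939 — 5 statements merged into one kernel-verified Lean document; each statement's English description precedes it below -/
import Mathlib

section
/- Define A_{μ,i}^n := ∑_{k=i}^{n} (−1)^{n-k} (n-1 choose k-1)(k-1)_{[i-1]} μ_{N-k} with μ_j = j(N-j)/N + juν₁. Then A_{μ,i}^n = 0 for 1 ≤ i ≤ n−3, A_{μ,n-2}^n = −(n-1)!/N, A_{μ,n-1}^n = (n-1)!·((N−2n+1)/N − uν₁), and A_{μ,n}^n = (n-1)!·(N−n)·(n/N + uν₁). -/
/-!
Substituting `j = k - 1` and `m = n - 1`, `A i` becomes the `m`-th forward difference at `0` of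
`j ↦ j_{[i-1]} · μ_{N-j-1}`. The `m`-th difference of `j ↦ j_{[r]} = r! · (j choose r)` at `0` is
`m!` if `r = m` and `0` otherwise. As `μ_{N-j-1}` is quadratic in `j`, the product
`j_{[r]} · μ_{N-j-1}` is a combination of `j_{[r+2]}`, `j_{[r+1]}` and `j_{[r]}`, so only
`i - 1 ∈ {m - 2, m - 1, m}` give a nonzero value.
-/

open Finset
open scoped Nat

section FallingFactorial

variable {R : Type*} [CommRing R]

theorem sum_alternating_choose_mul_choose (m r : ℕ) :
    ∑ j ∈ range (m + 1), (-1 : ℤ) ^ (m - j) * m.choose j * j.choose r =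
      if m = r then 1 else 0 := by
  have h := fwdDiff_iter_eq_sum_shift (1 : ℕ) (fun x ↦ (x.choose r : ℤ)) m 0
  simp only [fwdDiff_iter_choose_zero, zero_add, smul_eq_mul, mul_one] at h
  exact h.symm

theorem sum_alternating_choose_mul_descFactorial (m r : ℕ) :
    ∑ j ∈ range (m + 1), (-1 : R) ^ (m - j) * m.choose j * j.descFactorial r =
      if m = r then (m ! : R) else 0 := by
  calc _ = (r ! : R) *
        ((∑ j ∈ range (m + 1), (-1 : ℤ) ^ (m - j) * m.choose j * j.choose r : ℤ) : R) := by
        push_cast [mul_sum, Nat.descFactorial_eq_factorial_mul_choose]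
        exact sum_congr rfl fun _ _ ↦ by ring
    _ = _ := by
        rw [sum_alternating_choose_mul_choose]
        split_ifs with h <;> simp [h]

theorem descFactorial_mul_quadratic (j r : ℕ) (a b c : R) :
    (j.descFactorial r : R) * (a * j ^ 2 + b * j + c) =
      a * j.descFactorial (r + 2) + (a * (2 * r + 1) + b) * j.descFactorial (r + 1) +
        (a * r ^ 2 + b * r + c) * j.descFactorial r := by
  simp only [← descPochhammer_eval_eq_descFactorial, descPochhammer_succ_eval]
  push_cast
  ring

theorem sum_alternating_choose_mul_descFactorial_mul_quadratic (m r : ℕ) (a b c : R) :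
    ∑ j ∈ range (m + 1), (-1 : R) ^ (m - j) * m.choose j * j.descFactorial r *
        (a * j ^ 2 + b * j + c) =
      a * (if m = r + 2 then (m ! : R) else 0) +
        (a * (2 * r + 1) + b) * (if m = r + 1 then (m ! : R) else 0) +
        (a * r ^ 2 + b * r + c) * (if m = r then (m ! : R) else 0) := by
  simp only [← sum_alternating_choose_mul_descFactorial, mul_sum, ← sum_add_distrib]
  refine sum_congr rfl fun j _ ↦ ?_
  linear_combination (-1 : R) ^ (m - j) * m.choose j * descFactorial_mul_quadratic j r a b c

theorem sum_Icc_prod_sub_eq_sum_range_descFactorial (n i : ℕ) (hi : 1 ≤ i) (f : ℕ → R) :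
    ∑ k ∈ Icc i n, (-1 : R) ^ (n - k) * ((n - 1).choose (k - 1) : R) *
        (∏ t ∈ range (i - 1), ((k : R) - 1 - t)) * f k =
      ∑ j ∈ range n,
        (-1 : R) ^ (n - 1 - j) * (n - 1).choose j * j.descFactorial (i - 1) * f (j + 1) := by
  have prod_eq (k : ℕ) (hk : 1 ≤ k) :
      ∏ t ∈ range (i - 1), ((k : R) - 1 - t) = (k - 1).descFactorial (i - 1) := by
    rw [← descPochhammer_eval_eq_descFactorial, descPochhammer_eval_eq_prod_range,
      Nat.cast_sub hk, Nat.cast_one]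
  rw [sum_subset (Icc_subset_Icc_left hi)]
  · refine sum_nbij' (· - 1) (· + 1) ?_ ?_ ?_ ?_ ?_ <;> simp only [mem_Icc, mem_range]
    any_goals omega
    intro k hk
    rw [prod_eq k hk.1, Nat.sub_add_cancel hk.1, Nat.sub_sub, Nat.add_sub_cancel' hk.1]
  · intro k hk hk'
    simp only [mem_Icc] at hk hk'
    rw [prod_eq k hk.1, Nat.descFactorial_eq_zero_iff_lt.mpr (by omega)]
    simp

end FallingFactorial

theorem stmt11_general (N n : ℕ) (hn : 3 ≤ n) (u ν1 : ℝ)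
    (A : ℕ → ℝ)
    (hA : ∀ i, A i = ∑ k ∈ Finset.Icc i n,
      (-1:ℝ)^(n-k) * ((n-1).choose (k-1) : ℝ) *
        (∏ j ∈ Finset.range (i-1), (((k:ℝ) - 1) - j)) *
        (((N:ℝ) - k) * k / N + ((N:ℝ) - k) * u * ν1)) :
    (∀ i, 1 ≤ i → i ≤ n - 3 → A i = 0) ∧
    A (n-2) = -((n-1).factorial : ℝ) / N ∧
    A (n-1) = ((n-1).factorial : ℝ) * (((N:ℝ) - 2*n + 1) / N - u * ν1) ∧
    A n = ((n-1).factorial : ℝ) * ((N:ℝ) - n) * ((n:ℝ) / N + u * ν1) := by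
  -- `μ_{N-(j+1)} = a j² + b j + c`
  set a : ℝ := -1 / N
  set b : ℝ := (N - 2) / N - u * ν1
  set c : ℝ := (N - 1) / N + (N - 1) * u * ν1
  have hA' (i : ℕ) (hi : 1 ≤ i) : A i =
      a * (if n - 1 = i - 1 + 2 then ((n - 1)! : ℝ) else 0) +
        (a * (2 * (i - 1 : ℕ) + 1) + b) * (if n - 1 = i - 1 + 1 then ((n - 1)! : ℝ) else 0) +
        (a * (i - 1 : ℕ) ^ 2 + b * (i - 1 : ℕ) + c) *
          (if n - 1 = i - 1 then ((n - 1)! : ℝ) else 0) := by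
    rw [hA, sum_Icc_prod_sub_eq_sum_range_descFactorial n i hi,
      ← sum_alternating_choose_mul_descFactorial_mul_quadratic,
      Nat.sub_add_cancel (by omega : 1 ≤ n)]
    refine sum_congr rfl fun j _ ↦ ?_
    push_cast
    ring
  refine ⟨fun i hi hin ↦ ?_, ?_, ?_, ?_⟩
  · rw [hA' i hi, if_neg (by omega), if_neg (by omega), if_neg (by omega)]
    ring
  · rw [hA' _ (by omega), if_pos (by omega), if_neg (by omega), if_neg (by omega)]
    ring
  · rw [hA' _ (by omega), if_neg (by omega), if_pos (by omega), if_neg (by omega), Nat.sub_sub]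
    push_cast [a, b, Nat.cast_sub (by omega : 2 ≤ n)]
    ring
  · rw [hA' _ (by omega), if_neg (by omega), if_neg (by omega), if_pos rfl]
    push_cast [a, b, c, Nat.cast_sub (by omega : 1 ≤ n)]
    ring

/-- Evaluation of the quantities `A_{μ,i}^n` from the proof of Theorem 5.1:
they vanish for `i ≤ n-3`, and take explicit values for `i = n-2, n-1, n`.
Here `μ_{N-k} = (N-k)k/N + (N-k)uν₁`. -/
theorem stmt11 (N n : ℕ) (hn : 3 ≤ n) (hnN : n ≤ N - 1) (u ν1 : ℝ)
    (hu : 0 ≤ u) (hν1 : 0 ≤ ν1)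
    (A : ℕ → ℝ)
    (hA : ∀ i, A i = ∑ k ∈ Finset.Icc i n,
      (-1:ℝ)^(n-k) * ((n-1).choose (k-1) : ℝ) *
        (∏ j ∈ Finset.range (i-1), (((k:ℝ) - 1) - j)) *
        (((N:ℝ) - k) * k / N + ((N:ℝ) - k) * u * ν1)) :
    (∀ i, 1 ≤ i → i ≤ n - 3 → A i = 0) ∧
    A (n-2) = -((n-1).factorial : ℝ) / N ∧
    A (n-1) = ((n-1).factorial : ℝ) * (((N:ℝ) - 2*n + 1) / N - u * ν1) ∧
    A n = ((n-1).factorial : ℝ) * ((N:ℝ) - n) * ((n:ℝ) / N + u * ν1) :=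
  stmt11_general N n hn u ν1 A hA
end

section
/- Define A_{λ,i}^n := ∑_{k=i}^{n-1} (−1)^{n-k} (n-1 choose k)(k-1)_{[i-1]} λ_{N-k} with λ_j = j(N-j)(1+s)/N + (N-j)uν₀. Then A_{λ,i}^n = 0 for 1 ≤ i ≤ n−3, A_{λ,n-2}^n = (n-1)!·(1+s)/N, and A_{λ,n-1}^n = −(n-1)!·((N−(n−1))(1+s)/N + uν₀). -/
/-!
Write `m = n - 1` and `λ_{N-k} = k (a + b k)` with `a = 1 + s + uν₀`, `b = -(1 + s)/N`. The
identities `k (k-1)_{[i-1]} = k_{[i]}` and `k_{[i]} k = k_{[i+1]} + i k_{[i]}` turn `A_{λ,i}^n`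
into `-((a + i b) D_i + b D_{i+1})`, where `D_r = ∑_k (-1)^{m-k} C(m,k) k_{[r]} = r! Δ^m C(·,r) (0)`
is `m!` for `r = m` and `0` otherwise.
-/

open Finset Nat

section

variable {R : Type*} [CommRing R]

theorem sum_range_alternating_choose_mul_choose (m r : ℕ) :
    ∑ k ∈ range (m + 1), (-1 : R) ^ (m - k) * m.choose k * k.choose r = if r = m then 1 else 0 := by
  have h := fwdDiff_iter_choose_zero r m
  rw [fwdDiff_iter_eq_sum_shift] at h
  simpa [eq_comm] using congrArg (Int.cast : ℤ → R) h

theorem sum_range_alternating_choose_mul_descFactorial (m r : ℕ) :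
    ∑ k ∈ range (m + 1), (-1 : R) ^ (m - k) * m.choose k * k.descFactorial r =
      if r = m then (m ! : R) else 0 := by
  simp_rw [descFactorial_eq_factorial_mul_choose, cast_mul]
  calc _ = (r ! : R) * ∑ k ∈ range (m + 1), (-1 : R) ^ (m - k) * m.choose k * k.choose r := by
          rw [mul_sum]; exact sum_congr rfl fun _ _ ↦ by ring
    _ = _ := by rw [sum_range_alternating_choose_mul_choose]; split_ifs with h <;> simp [h]

theorem mul_prod_range_sub_one_sub (x : R) (i : ℕ) :
    x * ∏ j ∈ range i, (x - 1 - j) = ∏ j ∈ range (i + 1), (x - j) := by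
  rw [prod_range_succ', mul_comm]
  simp [sub_sub, add_comm (1 : R)]

theorem sum_Icc_alternating_choose_mul_prod_mul_quadratic (m i : ℕ) (hi : 1 ≤ i) (a b : R) :
    ∑ k ∈ Icc i m, (-1 : R) ^ (m + 1 - k) * m.choose k *
        (∏ j ∈ range (i - 1), ((k : R) - 1 - j)) * (k * (a + b * k)) =
      -(m ! : R) * ((if i = m then a + i * b else 0) + if i + 1 = m then b else 0) := by
  set g : ℕ → R := fun k ↦ (-1 : R) ^ (m - k) * m.choose k *
    ((a + i * b) * k.descFactorial i + b * k.descFactorial (i + 1))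
  have hterm : ∀ k ∈ Icc i m, (-1 : R) ^ (m + 1 - k) * m.choose k *
      (∏ j ∈ range (i - 1), ((k : R) - 1 - j)) * (k * (a + b * k)) = -g k := by
    intro k hk
    have hsign : (-1 : R) ^ (m + 1 - k) = -(-1) ^ (m - k) := by
      rw [Nat.sub_add_comm (mem_Icc.1 hk).2, pow_succ, mul_neg_one]
    have hfall : (k : R) * ∏ j ∈ range (i - 1), ((k : R) - 1 - j) = k.descFactorial i := by
      rw [mul_prod_range_sub_one_sub, Nat.sub_add_cancel hi, prod_range_natCast_sub,
        descFactorial_eq_prod_range]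
    have hshift : (k.descFactorial (i + 1) : R) = k.descFactorial i * (k - i) := by
      rw [descFactorial_eq_prod_range, descFactorial_eq_prod_range, ← prod_range_natCast_sub,
        ← prod_range_natCast_sub, prod_range_succ]
    simp only [g, hsign, hshift]
    linear_combination (-(-1 : R) ^ (m - k) * m.choose k * (a + b * k)) * hfall
  have hsubset : Icc i m ⊆ range (m + 1) := fun k hk ↦ by
    simp only [mem_range, mem_Icc] at hk ⊢; omega
  have hlow : ∀ k ∈ range (m + 1), k ∉ Icc i m → g k = 0 := by
    intro k hk hki
    have hlt : k < i := by simp only [mem_range, mem_Icc] at hk hki; omega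
    simp [g, descFactorial_eq_zero_iff_lt.2 hlt]
  rw [sum_congr rfl hterm, sum_neg_distrib, sum_subset hsubset hlow]
  have hsplit : ∑ k ∈ range (m + 1), g k =
      (a + i * b) * ∑ k ∈ range (m + 1), (-1 : R) ^ (m - k) * m.choose k * k.descFactorial i +
        b * ∑ k ∈ range (m + 1), (-1 : R) ^ (m - k) * m.choose k * k.descFactorial (i + 1) := by
    simp only [mul_sum, ← sum_add_distrib, g]
    exact sum_congr rfl fun _ _ ↦ by ring
  rw [hsplit, sum_range_alternating_choose_mul_descFactorial,
    sum_range_alternating_choose_mul_descFactorial]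
  split_ifs <;> ring

end

theorem stmt12_general (N n : ℕ) (hn : 3 ≤ n) (hnN : n ≤ N - 1) (s u ν0 : ℝ)
    (A : ℕ → ℝ)
    (hA : ∀ i, A i = ∑ k ∈ Finset.Icc i (n-1),
      (-1:ℝ)^(n-k) * ((n-1).choose k : ℝ) *
        (∏ j ∈ Finset.range (i-1), (((k:ℝ) - 1) - j)) *
        (((N:ℝ) - k) * k * (1 + s) / N + (k:ℝ) * u * ν0)) :
    (∀ i, 1 ≤ i → i ≤ n - 3 → A i = 0) ∧
    A (n-2) = ((n-1).factorial : ℝ) * (1 + s) / N ∧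
    A (n-1) = -((n-1).factorial : ℝ) * (((N:ℝ) - ((n:ℝ) - 1)) * (1 + s) / N + u * ν0) := by
  obtain ⟨m, rfl⟩ : ∃ m, n = m + 1 := ⟨n - 1, by omega⟩
  have hN : (N : ℝ) ≠ 0 := by exact_mod_cast (by omega : N ≠ 0)
  set a : ℝ := 1 + s + u * ν0
  set b : ℝ := -((1 + s) / N)
  have hrate : ∀ k : ℕ, ((N : ℝ) - k) * k * (1 + s) / N + k * u * ν0 = k * (a + b * k) := by
    intro k
    simp only [a, b]
    field_simp
    ring
  have hA_eval : ∀ i, 1 ≤ i → A i =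
      -(m ! : ℝ) * ((if i = m then a + i * b else 0) + if i + 1 = m then b else 0) := by
    intro i hi
    rw [hA, ← sum_Icc_alternating_choose_mul_prod_mul_quadratic m i hi]
    simp_rw [Nat.add_sub_cancel, hrate]
  simp only [Nat.add_sub_cancel, Nat.cast_add, Nat.cast_one, add_sub_cancel_right]
  refine ⟨fun i hi1 hi3 ↦ ?_, ?_, ?_⟩
  · rw [hA_eval i hi1, if_neg (by omega), if_neg (by omega)]
    ring
  · rw [hA_eval _ (by omega), if_neg (by omega), if_pos (by omega)]
    simp only [b]
    ring
  · rw [hA_eval _ (by omega), if_pos rfl, if_neg (by omega)]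
    simp only [a, b]
    field_simp
    ring

/-- Evaluation of the quantities `A_{λ,i}^n` from the proof of Theorem 5.1:
they vanish for `i ≤ n-3`, and take explicit values for `i = n-2, n-1`.
Here `λ_{N-k} = (N-k)k(1+s)/N + kuν₀`. -/
theorem stmt12 (N n : ℕ) (hn : 3 ≤ n) (hnN : n ≤ N - 1) (s u ν0 : ℝ)
    (hs : 0 ≤ s) (hu : 0 ≤ u) (hν0 : 0 ≤ ν0)
    (A : ℕ → ℝ)
    (hA : ∀ i, A i = ∑ k ∈ Finset.Icc i (n-1),
      (-1:ℝ)^(n-k) * ((n-1).choose k : ℝ) *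
        (∏ j ∈ Finset.range (i-1), (((k:ℝ) - 1) - j)) *
        (((N:ℝ) - k) * k * (1 + s) / N + (k:ℝ) * u * ν0)) :
    (∀ i, 1 ≤ i → i ≤ n - 3 → A i = 0) ∧
    A (n-2) = ((n-1).factorial : ℝ) * (1 + s) / N ∧
    A (n-1) = -((n-1).factorial : ℝ) * (((N:ℝ) - ((n:ℝ) - 1)) * (1 + s) / N + u * ν0) :=
  stmt12_general N n hn hnN s u ν0 A hA
end

section
/- Let φ₁(x) = (1−x)^{−θν₁} x^{−θν₀} e^{−σx}, x̃ := (∫₀¹ p^{θν₀+1}(1−p)^{θν₁} e^{σp} dp)/(∫₀¹ p^{θν₀}(1−p)^{θν₁} e^{σp} dp), and φ₂(x) := σ φ₁(x) ∫₀ˣ (x̃ − p)/φ₁(p) dp. Then φ₂ solves ψ'(x) + 2(a(x)/b(x))ψ(x) = −σ(x − x̃) on (0,1), and lim_{x→0⁺} φ₂(x) = lim_{x→1⁻} φ₂(x) = 0. -/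
/-!
On `(0,1)`, `1/φ₁` is the tilted Beta weight `w(p) = p^{θν₀} (1-p)^{θν₁} e^{σp}`, so
`φ₂ = σ F / w` with `F(x) = ∫₀ˣ (x̃ - p) w(p) dp`. Since `w'/w = σ - θν₁/(1-x) + θν₀/x`, the
differential equation is the quotient rule. At the endpoints `w` vanishes, and so does `F`:
`F(0) = 0` trivially and `F(1) = 0` because `x̃` is the `w`-mean of `p`. L'Hôpital's rule turns
`F/w` into `(x̃ - x)/(w'/w)`, which tends to `0` since `|w'/w| → ∞` at both ends.
-/

open Real Filter Topology Set

theorem hasDerivAt_div_of_hasDerivAt_eq_mul {w F : ℝ → ℝ} {c g x : ℝ}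
    (hw : HasDerivAt w (w x * c) x) (hw0 : w x ≠ 0) (hF : HasDerivAt F (g * w x) x) :
    HasDerivAt (fun y => F y / w y) (-(c * (F x / w x)) + g) x := by
  refine (hF.div hw hw0).congr_deriv ?_
  field_simp
  ring

theorem tendsto_mul_div_mul_of_abs_atTop {α : Type*} {l : Filter α} {c w D : α → ℝ} {c₀ : ℝ}
    (hc : Tendsto c l (𝓝 c₀)) (hD : Tendsto (fun x => |D x|) l atTop)
    (hw : ∀ᶠ x in l, w x ≠ 0) :
    Tendsto (fun x => c x * w x / (w x * D x)) l (𝓝 0) := by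
  have hcD : Tendsto (fun x => |c x| / |D x|) l (𝓝 0) := hc.abs.div_atTop hD
  rw [tendsto_zero_iff_abs_tendsto_zero]
  refine hcD.congr' ?_
  filter_upwards [hw] with x hx
  rw [Function.comp_apply, mul_comm (c x), mul_div_mul_left _ _ hx, abs_div]

theorem integral_sub_mean_mul_eq_zero {w : ℝ → ℝ} {a b : ℝ}
    (hw : IntervalIntegrable w MeasureTheory.volume a b)
    (hpw : IntervalIntegrable (fun p => p * w p) MeasureTheory.volume a b)
    (h : ∫ p in a..b, w p ≠ 0) :
    ∫ p in a..b, ((∫ q in a..b, q * w q) / (∫ q in a..b, w q) - p) * w p = 0 := by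
  simp_rw [sub_mul]
  rw [intervalIntegral.integral_sub (hw.const_mul _) hpw, intervalIntegral.integral_const_mul,
    div_mul_cancel₀ _ h, sub_self]

noncomputable def betaExpWeight (A B σ p : ℝ) : ℝ := p ^ B * (1 - p) ^ A * exp (σ * p)

section BetaExpWeight

variable {A B σ : ℝ}

theorem continuous_betaExpWeight (hA : 0 ≤ A) (hB : 0 ≤ B) :
    Continuous (betaExpWeight A B σ) := by
  unfold betaExpWeight
  fun_prop (disch := assumption)

theorem betaExpWeight_pos {p : ℝ} (hp : p ∈ Ioo 0 1) : 0 < betaExpWeight A B σ p :=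
  mul_pos (mul_pos (rpow_pos_of_pos hp.1 B) (rpow_pos_of_pos (sub_pos.2 hp.2) A)) (exp_pos _)

theorem betaExpWeight_zero (hB : B ≠ 0) : betaExpWeight A B σ 0 = 0 := by
  simp [betaExpWeight, zero_rpow hB]

theorem betaExpWeight_one (hA : A ≠ 0) : betaExpWeight A B σ 1 = 0 := by
  simp [betaExpWeight, zero_rpow hA]

-- Valid on the closed interval thanks to the conventions `0⁻¹ = 0` and `0 ^ y = 0` for `y ≠ 0`.
theorem inv_betaExpWeight {p : ℝ} (hp : p ∈ Icc 0 1) :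
    (betaExpWeight A B σ p)⁻¹ = (1 - p) ^ (-A) * p ^ (-B) * exp (-(σ * p)) := by
  rw [betaExpWeight, rpow_neg (sub_nonneg.2 hp.2), rpow_neg hp.1, exp_neg]
  ring

theorem rpow_add_one_mul_eq_mul_betaExpWeight (hB : 0 ≤ B) {p : ℝ} (hp : 0 ≤ p) :
    p ^ (B + 1) * (1 - p) ^ A * exp (σ * p) = p * betaExpWeight A B σ p := by
  rw [rpow_add_one' hp (by positivity), betaExpWeight]
  ring

theorem hasDerivAt_betaExpWeight {x : ℝ} (hx : x ∈ Ioo 0 1) :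
    HasDerivAt (betaExpWeight A B σ)
      (betaExpWeight A B σ x * (σ - A / (1 - x) + B / x)) x := by
  have hx1 : 0 < 1 - x := sub_pos.2 hx.2
  refine (((hasDerivAt_rpow_const (p := B) (Or.inl hx.1.ne')).mul
    (((hasDerivAt_id' x).const_sub 1).rpow_const (p := A) (Or.inl hx1.ne'))).mul
    ((hasDerivAt_id' x).const_mul σ).exp).congr_deriv ?_
  rw [betaExpWeight, Pi.mul_apply]
  simp only [rpow_sub_one hx.1.ne', rpow_sub_one hx1.ne']
  field_simp
  ring

theorem tendsto_logDeriv_betaExpWeight_nhdsGT_zero (hB : 0 < B) :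
    Tendsto (fun x => σ - A / (1 - x) + B / x) (𝓝[>] 0) atTop := by
  have hA : Tendsto (fun x : ℝ => σ - A / (1 - x)) (𝓝[>] 0) (𝓝 (σ - A / (1 - 0))) :=
    (tendsto_const_nhds.sub (tendsto_const_nhds.div (tendsto_const_nhds.sub tendsto_id)
      (by norm_num))).mono_left nhdsWithin_le_nhds
  exact hA.add_atTop (tendsto_inv_nhdsGT_zero.const_mul_atTop hB)

theorem tendsto_logDeriv_betaExpWeight_nhdsLT_one (hA : 0 < A) :
    Tendsto (fun x => σ - A / (1 - x) + B / x) (𝓝[<] 1) atBot := by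
  have hsub : Tendsto (fun x : ℝ => 1 - x) (𝓝[<] 1) (𝓝[>] 0) := by
    refine tendsto_nhdsWithin_of_tendsto_nhds_of_eventually_within _ ?_
      (eventually_nhdsWithin_of_forall fun x hx => mem_Ioi.2 (sub_pos.2 hx))
    have h : Tendsto (fun x : ℝ => 1 - x) (𝓝 1) (𝓝 (1 - 1)) := tendsto_const_nhds.sub tendsto_id
    rw [sub_self] at h
    exact h.mono_left nhdsWithin_le_nhds
  have hB : Tendsto (fun x : ℝ => σ + B / x) (𝓝[<] 1) (𝓝 (σ + B / 1)) :=
    (tendsto_const_nhds.add (tendsto_const_nhds.div tendsto_id one_ne_zero)).mono_left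
      nhdsWithin_le_nhds
  refine (hB.add_atBot (tendsto_neg_atTop_atBot.comp
    ((tendsto_inv_nhdsGT_zero.comp hsub).const_mul_atTop hA))).congr fun x => ?_
  simp only [Function.comp_apply, div_eq_mul_inv]
  ring

theorem integral_sub_mean_mul_betaExpWeight (hA : 0 ≤ A) (hB : 0 ≤ B) :
    ∫ p in 0..1, ((∫ q in 0..1, q ^ (B + 1) * (1 - q) ^ A * exp (σ * q)) /
      (∫ q in 0..1, q ^ B * (1 - q) ^ A * exp (σ * q)) - p) * betaExpWeight A B σ p = 0 := by
  have hw := continuous_betaExpWeight (σ := σ) hA hB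
  have hnum : ∫ q in 0..1, q ^ (B + 1) * (1 - q) ^ A * exp (σ * q) =
      ∫ q in 0..1, q * betaExpWeight A B σ q := by
    refine intervalIntegral.integral_congr fun q hq => ?_
    rw [uIcc_of_le zero_le_one] at hq
    exact rpow_add_one_mul_eq_mul_betaExpWeight hB hq.1
  rw [hnum]
  refine integral_sub_mean_mul_eq_zero (hw.intervalIntegrable 0 1)
    ((continuous_id.mul hw).intervalIntegrable 0 1) ?_
  exact (intervalIntegral.intervalIntegral_pos_of_pos_on (hw.intervalIntegrable 0 1)
    (fun p hp => betaExpWeight_pos hp) zero_lt_one).ne'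

theorem hasDerivAt_integral_sub_mul_betaExpWeight (hA : 0 ≤ A) (hB : 0 ≤ B) (m x : ℝ) :
    HasDerivAt (fun y => ∫ p in 0..y, (m - p) * betaExpWeight A B σ p)
      ((m - x) * betaExpWeight A B σ x) x :=
  (((continuous_const.sub continuous_id).mul
    (continuous_betaExpWeight hA hB)).integral_hasStrictDerivAt 0 x).hasDerivAt

theorem hasDerivAt_integral_div_betaExpWeight (hA : 0 ≤ A) (hB : 0 ≤ B) (m : ℝ) {x : ℝ}
    (hx : x ∈ Ioo 0 1) :
    HasDerivAt (fun y => (∫ p in 0..y, (m - p) * betaExpWeight A B σ p) / betaExpWeight A B σ y)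
      (-((σ - A / (1 - x) + B / x) *
        ((∫ p in 0..x, (m - p) * betaExpWeight A B σ p) / betaExpWeight A B σ x)) + (m - x)) x :=
  hasDerivAt_div_of_hasDerivAt_eq_mul (hasDerivAt_betaExpWeight hx) (betaExpWeight_pos hx).ne'
    (hasDerivAt_integral_sub_mul_betaExpWeight hA hB m x)

theorem tendsto_integral_div_betaExpWeight_nhdsGT_zero (hA : 0 < A) (hB : 0 < B) (m : ℝ) :
    Tendsto (fun x => (∫ p in 0..x, (m - p) * betaExpWeight A B σ p) / betaExpWeight A B σ x)
      (𝓝[>] 0) (𝓝 0) := by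
  have hIoo : ∀ᶠ x in 𝓝[>] (0 : ℝ), x ∈ Ioo 0 1 := Ioo_mem_nhdsGT one_pos
  have hD := tendsto_logDeriv_betaExpWeight_nhdsGT_zero (A := A) (σ := σ) hB
  have hF : Tendsto (fun x => ∫ p in 0..x, (m - p) * betaExpWeight A B σ p) (𝓝[>] 0) (𝓝 0) := by
    have h := (hasDerivAt_integral_sub_mul_betaExpWeight (σ := σ) hA.le hB.le m 0).continuousAt
    rw [ContinuousAt, intervalIntegral.integral_same] at h
    exact h.mono_left nhdsWithin_le_nhds
  have hw : Tendsto (betaExpWeight A B σ) (𝓝[>] 0) (𝓝 0) :=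
    ((continuous_betaExpWeight hA.le hB.le).tendsto' 0 0 (betaExpWeight_zero hB.ne')).mono_left
      nhdsWithin_le_nhds
  refine HasDerivAt.lhopital_zero_nhdsGT
    (Eventually.of_forall (hasDerivAt_integral_sub_mul_betaExpWeight hA.le hB.le m))
    (hIoo.mono fun x hx => hasDerivAt_betaExpWeight hx) ?_ hF hw
    (tendsto_mul_div_mul_of_abs_atTop
      ((tendsto_const_nhds.sub tendsto_id).mono_left nhdsWithin_le_nhds)
      (tendsto_abs_atTop_atTop.comp hD) (hIoo.mono fun x hx => (betaExpWeight_pos hx).ne'))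
  filter_upwards [hIoo, hD.eventually_gt_atTop 0] with x hx hDx
  exact (mul_pos (betaExpWeight_pos hx) hDx).ne'

theorem tendsto_integral_div_betaExpWeight_nhdsLT_one (hA : 0 < A) (hB : 0 < B) {m : ℝ}
    (hm : ∫ p in 0..1, (m - p) * betaExpWeight A B σ p = 0) :
    Tendsto (fun x => (∫ p in 0..x, (m - p) * betaExpWeight A B σ p) / betaExpWeight A B σ x)
      (𝓝[<] 1) (𝓝 0) := by
  have hIoo : ∀ᶠ x in 𝓝[<] (1 : ℝ), x ∈ Ioo 0 1 := Ioo_mem_nhdsLT one_pos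
  have hD := tendsto_logDeriv_betaExpWeight_nhdsLT_one (B := B) (σ := σ) hA
  have hF : Tendsto (fun x => ∫ p in 0..x, (m - p) * betaExpWeight A B σ p) (𝓝[<] 1) (𝓝 0) := by
    have h := (hasDerivAt_integral_sub_mul_betaExpWeight (σ := σ) hA.le hB.le m 1).continuousAt
    rw [ContinuousAt, hm] at h
    exact h.mono_left nhdsWithin_le_nhds
  have hw : Tendsto (betaExpWeight A B σ) (𝓝[<] 1) (𝓝 0) :=
    ((continuous_betaExpWeight hA.le hB.le).tendsto' 1 0 (betaExpWeight_one hA.ne')).mono_left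
      nhdsWithin_le_nhds
  refine HasDerivAt.lhopital_zero_nhdsLT
    (Eventually.of_forall (hasDerivAt_integral_sub_mul_betaExpWeight hA.le hB.le m))
    (hIoo.mono fun x hx => hasDerivAt_betaExpWeight hx) ?_ hF hw
    (tendsto_mul_div_mul_of_abs_atTop
      ((tendsto_const_nhds.sub tendsto_id).mono_left nhdsWithin_le_nhds)
      (tendsto_abs_atBot_atTop.comp hD) (hIoo.mono fun x hx => (betaExpWeight_pos hx).ne'))
  filter_upwards [hIoo, hD.eventually_lt_atBot 0] with x hx hDx
  exact (mul_neg_of_pos_of_neg (betaExpWeight_pos hx) hDx).ne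

end BetaExpWeight

-- Here `2a(x)/b(x) = σ - θν₁/(1-x) + θν₀/x`.
theorem stmt15_general (θ σ ν0 ν1 : ℝ) (hθ : 0 < θ)
    (hν0 : ν0 ∈ Set.Ioo (0:ℝ) 1) (hν1 : ν1 ∈ Set.Ioo (0:ℝ) 1)
    (φ₁ φ₂ : ℝ → ℝ) (xt : ℝ)
    (hφ₁ : ∀ x, φ₁ x = (1-x) ^ (-(θ * ν1)) * x ^ (-(θ * ν0)) * Real.exp (-(σ * x)))
    (hxt : xt = (∫ p in (0:ℝ)..1, p ^ (θ * ν0 + 1) * (1-p) ^ (θ * ν1) * Real.exp (σ * p))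
              / (∫ p in (0:ℝ)..1, p ^ (θ * ν0) * (1-p) ^ (θ * ν1) * Real.exp (σ * p)))
    (hφ₂ : ∀ x, φ₂ x = σ * φ₁ x * ∫ p in (0:ℝ)..x, (xt - p) / φ₁ p) :
    (∀ x ∈ Set.Ioo (0:ℝ) 1,
      HasDerivAt φ₂ (-((σ - θ * ν1 / (1-x) + θ * ν0 / x) * φ₂ x) - σ * (x - xt)) x) ∧
    Filter.Tendsto φ₂ (nhdsWithin 0 (Set.Ioi 0)) (nhds 0) ∧
    Filter.Tendsto φ₂ (nhdsWithin 1 (Set.Iio 1)) (nhds 0) := by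
  have hA : 0 < θ * ν1 := mul_pos hθ hν1.1
  have hB : 0 < θ * ν0 := mul_pos hθ hν0.1
  set w := betaExpWeight (θ * ν1) (θ * ν0) σ
  have hφ₁w : ∀ x ∈ Icc (0 : ℝ) 1, φ₁ x = (w x)⁻¹ := fun x hx => by
    rw [hφ₁, inv_betaExpWeight hx]
  have hφ₂w : EqOn φ₂ (fun x => σ * ((∫ p in 0..x, (xt - p) * w p) / w x)) (Icc 0 1) := by
    intro x hx
    have hint : ∫ p in 0..x, (xt - p) / φ₁ p = ∫ p in 0..x, (xt - p) * w p :=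
      intervalIntegral.integral_congr fun p hp => by
        rw [uIcc_of_le hx.1] at hp
        rw [hφ₁w p ⟨hp.1, hp.2.trans hx.2⟩, div_inv_eq_mul]
    rw [hφ₂, hint, hφ₁w x hx]
    ring
  have hmean : ∫ p in 0..1, (xt - p) * w p = 0 := by
    rw [hxt]
    exact integral_sub_mean_mul_betaExpWeight hA.le hB.le
  refine ⟨fun x hx => ?_, ?_, ?_⟩
  · refine (((hasDerivAt_integral_div_betaExpWeight hA.le hB.le xt hx).const_mul σ)
      |>.congr_of_eventuallyEq (hφ₂w.eventuallyEq_of_mem (Icc_mem_nhds hx.1 hx.2))).congr_deriv ?_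
    rw [hφ₂w (Ioo_subset_Icc_self hx)]
    ring
  · simpa using ((tendsto_integral_div_betaExpWeight_nhdsGT_zero hA hB xt).const_mul σ).congr'
      (hφ₂w.eventuallyEq_of_mem (Icc_mem_nhdsGT one_pos)).symm
  · simpa using ((tendsto_integral_div_betaExpWeight_nhdsLT_one hA hB hmean).const_mul σ).congr'
      (hφ₂w.eventuallyEq_of_mem (Icc_mem_nhdsLT one_pos)).symm

/-- The variation-of-parameters solution `φ₂` solves the inhomogeneous first-order
ODE `ψ' + 2(a/b)ψ = -σ(x - x̃)` on `(0,1)` (where `2a/b = σ - θν₁/(1-x) + θν₀/x`),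
and vanishes in the limits `x → 0⁺` and `x → 1⁻`. -/
theorem stmt15 (θ σ ν0 ν1 : ℝ) (hθ : 0 < θ) (hσ : 0 ≤ σ)
    (hν0 : ν0 ∈ Set.Ioo (0:ℝ) 1) (hν1 : ν1 ∈ Set.Ioo (0:ℝ) 1) (hνsum : ν0 + ν1 = 1)
    (φ₁ φ₂ : ℝ → ℝ) (xt : ℝ)
    (hφ₁ : ∀ x, φ₁ x = (1-x) ^ (-(θ * ν1)) * x ^ (-(θ * ν0)) * Real.exp (-(σ * x)))
    (hxt : xt = (∫ p in (0:ℝ)..1, p ^ (θ * ν0 + 1) * (1-p) ^ (θ * ν1) * Real.exp (σ * p))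
              / (∫ p in (0:ℝ)..1, p ^ (θ * ν0) * (1-p) ^ (θ * ν1) * Real.exp (σ * p)))
    (hφ₂ : ∀ x, φ₂ x = σ * φ₁ x * ∫ p in (0:ℝ)..x, (xt - p) / φ₁ p) :
    (∀ x ∈ Set.Ioo (0:ℝ) 1,
      HasDerivAt φ₂ (-((σ - θ * ν1 / (1-x) + θ * ν0 / x) * φ₂ x) - σ * (x - xt)) x) ∧
    Filter.Tendsto φ₂ (nhdsWithin 0 (Set.Ioi 0)) (nhds 0) ∧
    Filter.Tendsto φ₂ (nhdsWithin 1 (Set.Iio 1)) (nhds 0) :=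
  stmt15_general θ σ ν0 ν1 hθ hν0 hν1 φ₁ φ₂ xt hφ₁ hxt hφ₂
end

section
/- Let ψ : [0,1] → ℝ be twice continuously differentiable with ψ(0) = ψ(1) = 0 and satisfying ψ'(x) + (σ − θν₁/(1−x) + θν₀/x)ψ(x) = −σ(x − x̃) on (0,1), with ψ' continuous at 1. Then −ψ'(1)(1 + θν₁) = σ(1 − x̃); equivalently, the coefficient a₁ := −ψ'(1) equals σ(1−x̃)/(1+θν₁). -/
open Filter Topology Set

/-- The one-sided limit of `deriv f` is a left derivative of `f` at `b`, and `f x / (b - x)` is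
minus the slope of `f` at `b`. -/
theorem tendsto_div_sub_nhdsLT_of_tendsto_deriv {f : ℝ → ℝ} {s : Set ℝ} {b L : ℝ}
    (hdiff : DifferentiableOn ℝ f s) (hcont : ContinuousWithinAt f s b) (hs : s ∈ 𝓝[<] b)
    (hfb : f b = 0) (hL : Tendsto (deriv f) (𝓝[<] b) (𝓝 L)) :
    Tendsto (fun x => f x / (b - x)) (𝓝[<] b) (𝓝 (-L)) := by
  have hslope : Tendsto (slope f b) (𝓝[<] b) (𝓝 L) := by
    simpa [Iic_sdiff_right] using hasDerivWithinAt_iff_tendsto_slope.mp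
      (hasDerivWithinAt_Iic_of_tendsto_deriv hdiff hcont hs hL)
  refine hslope.neg.congr fun x => ?_
  rw [slope_def_field, hfb, sub_zero, ← div_neg, neg_sub]

theorem stmt16_general (θ σ ν0 ν1 xt : ℝ)
    (ψ : ℝ → ℝ)
    (hC2 : ContDiffOn ℝ 2 ψ (Set.Icc 0 1))
    (hψ1 : ψ 1 = 0)
    (hODE : ∀ x ∈ Set.Ioo (0:ℝ) 1,
      deriv ψ x + (σ - θ * ν1 / (1-x) + θ * ν0 / x) * ψ x = -(σ * (x - xt)))
    (hcont : ContinuousWithinAt (deriv ψ) (Set.Icc 0 1) 1) :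
    -deriv ψ 1 * (1 + θ * ν1) = σ * (1 - xt) := by
  have hIcc : Icc (0:ℝ) 1 ∈ 𝓝[<] 1 := Icc_mem_nhdsLT zero_lt_one
  have hψ_cont : ContinuousWithinAt ψ (Icc 0 1) 1 := hC2.continuousOn 1 ⟨zero_le_one, le_rfl⟩
  have hderiv : Tendsto (deriv ψ) (𝓝[<] 1) (𝓝 (deriv ψ 1)) :=
    hcont.tendsto.mono_left (nhdsWithin_le_of_mem hIcc)
  have hψ : Tendsto ψ (𝓝[<] 1) (𝓝 0) :=
    hψ1 ▸ hψ_cont.tendsto.mono_left (nhdsWithin_le_of_mem hIcc)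
  have hquot : Tendsto (fun x => ψ x / (1 - x)) (𝓝[<] 1) (𝓝 (-deriv ψ 1)) :=
    tendsto_div_sub_nhdsLT_of_tendsto_deriv (hC2.differentiableOn two_ne_zero) hψ_cont hIcc
      hψ1 hderiv
  have hlhs : Tendsto (fun x => deriv ψ x + (σ - θ * ν1 / (1 - x) + θ * ν0 / x) * ψ x)
      (𝓝[<] 1) (𝓝 (deriv ψ 1 * (1 + θ * ν1))) := by
    have hx : Tendsto (fun x : ℝ => x) (𝓝[<] 1) (𝓝 1) :=
      tendsto_nhdsWithin_of_tendsto_nhds tendsto_id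
    convert ((hderiv.add (hψ.const_mul σ)).sub (hquot.const_mul (θ * ν1))).add
      ((hψ.div hx one_ne_zero).const_mul (θ * ν0)) using 2
    · simp only [Pi.div_apply]; ring
    · ring
  have hrhs : Tendsto (fun x => -(σ * (x - xt))) (𝓝[<] 1) (𝓝 (-(σ * (1 - xt)))) :=
    tendsto_nhdsWithin_of_tendsto_nhds
      ((by fun_prop : Continuous fun x => -(σ * (x - xt))).tendsto 1)
  have hlim := tendsto_nhds_unique
    (hlhs.congr' (eventually_of_mem (Ioo_mem_nhdsLT zero_lt_one) hODE)) hrhs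
  linarith

/-- The initial coefficient `a₁ = -ψ'(1)` satisfies
`-ψ'(1)(1 + θν₁) = σ(1 - x̃)`, obtained from the limit `x → 1` of the
first-order ODE `ψ' + (σ - θν₁/(1-x) + θν₀/x)ψ = -σ(x - x̃)`. -/
theorem stmt16 (θ σ ν0 ν1 xt : ℝ) (hθ : 0 < θ) (hσ : 0 ≤ σ)
    (hν0 : ν0 ∈ Set.Ioo (0:ℝ) 1) (hν1 : ν1 ∈ Set.Ioo (0:ℝ) 1) (hνsum : ν0 + ν1 = 1)
    (ψ : ℝ → ℝ)
    (hC2 : ContDiffOn ℝ 2 ψ (Set.Icc 0 1))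
    (hψ0 : ψ 0 = 0) (hψ1 : ψ 1 = 0)
    (hODE : ∀ x ∈ Set.Ioo (0:ℝ) 1,
      deriv ψ x + (σ - θ * ν1 / (1-x) + θ * ν0 / x) * ψ x = -(σ * (x - xt)))
    (hcont : ContinuousWithinAt (deriv ψ) (Set.Icc 0 1) 1) :
    -deriv ψ 1 * (1 + θ * ν1) = σ * (1 - xt) :=
  stmt16_general θ σ ν0 ν1 xt ψ hC2 hψ1 hODE hcont
end

section
/- Suppose (a_n)_{n≥1} are real numbers satisfying the recursion (2+θν₁)a₂ − (2+σ+θ)a₁ + σ = 0 and (n+θν₁)a_n − (n+σ+θ)a_{n-1} + σa_{n-2} = 0 for n ≥ 3, and suppose v(x) := ∑_{n≥1} a_n(1−x)^n converges for x ∈ (0,1) with ψ(x) := x·v(x). Then ψ formally satisfies the ODE x(1−x)ψ''(x) + [(1−x)θν₀ − xθν₁ + (1−x)xσ]ψ'(x) − (θν₁·x/(1−x) + θν₀·(1−x)/x)ψ(x) + σx(1−x) = 0, in the sense that substituting the power series in (1−x) makes all coefficients vanish. -/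
/-!
Put `y = 1 - x` and `v(y) = ∑ aₙ yⁿ`, so that `ψ(x) = x v(1 - x)`. Since `a₀ = 0`, the recursion says
precisely that `y(1-y)v' + θν₁v - (1+σ+θ)yv + σy²v = (1+θν₁)a₁y - σy²` as power series. Dividing
by `y` and differentiating eliminates the free coefficient `a₁`; with `ν₀ = 1 - ν₁` the resulting
second-order relation for `v` is the ODE for `ψ` divided by `x(1 - x)`.
-/

open Set Topology

theorem summable_pow_mul_coeff_mul_pow {c : ℕ → ℝ} {r y : ℝ}
    (hc : Summable fun n => c n * r ^ n) (hy : |y| < |r|) (k : ℕ) :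
    Summable fun n : ℕ => (n : ℝ) ^ k * c n * y ^ n := by
  obtain ⟨C, hC⟩ := hc.tendsto_atTop_zero.norm.bddAbove_range
  have hr : 0 < |r| := (abs_nonneg y).trans_lt hy
  have hq : ‖|y| / |r|‖ < 1 := by
    rw [Real.norm_of_nonneg (by positivity)]
    exact (div_lt_one hr).2 hy
  refine .of_norm_bounded
    ((summable_pow_mul_geometric_of_norm_lt_one k hq).mul_left C) fun n => ?_
  have hCn : ‖c n * r ^ n‖ ≤ C := hC ⟨n, rfl⟩
  calc ‖(n : ℝ) ^ k * c n * y ^ n‖ = ‖c n * r ^ n‖ * ((n : ℝ) ^ k * (|y| / |r|) ^ n) := by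
        simp only [norm_mul, norm_pow, Real.norm_eq_abs, Nat.abs_cast, div_pow]
        field_simp
    _ ≤ C * ((n : ℝ) ^ k * (|y| / |r|) ^ n) := by gcongr

def SummableOnUnitInterval (c : ℕ → ℝ) : Prop :=
  ∀ r ∈ Ioo (0 : ℝ) 1, Summable fun n => c n * r ^ n

def derivCoeff (c : ℕ → ℝ) (n : ℕ) : ℝ := (n + 1) * c (n + 1)

noncomputable def seriesSum (c : ℕ → ℝ) (y : ℝ) : ℝ := ∑' n, c n * y ^ n

namespace SummableOnUnitInterval

variable {c : ℕ → ℝ}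

theorem summable_pow_mul (hc : SummableOnUnitInterval c) {y : ℝ} (hy : |y| < 1) (k : ℕ) :
    Summable fun n : ℕ => (n : ℝ) ^ k * c n * y ^ n := by
  obtain ⟨r, hyr, hr1⟩ := exists_between hy
  have hr0 : 0 < r := (abs_nonneg y).trans_lt hyr
  exact summable_pow_mul_coeff_mul_pow (hc r ⟨hr0, hr1⟩) (by rwa [abs_of_pos hr0]) k

theorem summable (hc : SummableOnUnitInterval c) {y : ℝ} (hy : |y| < 1) :
    Summable fun n => c n * y ^ n := by
  simpa using hc.summable_pow_mul hy 0

theorem abs (hc : SummableOnUnitInterval c) : SummableOnUnitInterval fun n => |c n| :=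
  fun r hr => (hc r hr).abs.congr fun n => by
    rw [abs_mul, abs_pow, abs_of_pos hr.1]

theorem shift (hc : SummableOnUnitInterval c) : SummableOnUnitInterval fun n => c (n + 1) :=
  fun r hr => (((summable_nat_add_iff 1).2 (hc r hr)).mul_left r⁻¹).congr fun n => by
    field_simp [hr.1.ne']
    ring

theorem derivCoeff (hc : SummableOnUnitInterval c) :
    SummableOnUnitInterval (derivCoeff c) := fun r hr => by
  have hr' : |r| < 1 := by rw [abs_of_pos hr.1]; exact hr.2
  refine ((hc.shift.summable_pow_mul hr' 1).add (hc.shift.summable_pow_mul hr' 0)).congr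
    fun n => ?_
  simp only [_root_.derivCoeff]
  ring

end SummableOnUnitInterval

theorem hasSum_mul_natCast_mul_pow_sub_one {c : ℕ → ℝ} {t s : ℝ}
    (h : HasSum (fun n => derivCoeff c n * t ^ n) s) :
    HasSum (fun n => c n * (n * t ^ (n - 1))) s := by
  rw [← hasSum_nat_add_iff' 1]
  simpa [derivCoeff, mul_comm, mul_left_comm] using h

theorem hasDerivAt_seriesSum {c : ℕ → ℝ} (hc : SummableOnUnitInterval c) {y : ℝ}
    (hy : |y| < 1) : HasDerivAt (seriesSum c) (seriesSum (derivCoeff c) y) y := by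
  obtain ⟨r, hyr, hr1⟩ := exists_between hy
  have hr0 : 0 < r := (abs_nonneg y).trans_lt hyr
  have hu := hasSum_mul_natCast_mul_pow_sub_one
    (hc.abs.derivCoeff.summable (by rwa [abs_of_pos hr0])).hasSum
  have hval := hasSum_mul_natCast_mul_pow_sub_one (hc.derivCoeff.summable hy).hasSum
  rw [seriesSum, ← hval.tsum_eq]
  refine hasDerivAt_tsum_of_isPreconnected hu.summable Metric.isOpen_ball
    (convex_ball 0 r).isPreconnected (fun n t _ => (hasDerivAt_pow n t).const_mul (c n))
    (fun n t ht => ?_) (Metric.mem_ball_self hr0) (by simpa using hc.summable (by simp))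
    (by simpa using hyr)
  rw [mem_ball_zero_iff, Real.norm_eq_abs] at ht
  rw [Real.norm_eq_abs, abs_mul, abs_mul, abs_pow, Nat.abs_cast]
  gcongr

theorem hasSum_natCast_mul_mul_pow {c : ℕ → ℝ}
    (hc : SummableOnUnitInterval c) {y : ℝ} (hy : |y| < 1) :
    HasSum (fun n : ℕ => n * c n * y ^ n) (y * seriesSum (derivCoeff c) y) := by
  refine ((hasSum_mul_natCast_mul_pow_sub_one (hc.derivCoeff.summable hy).hasSum).mul_left y
    ).congr_fun fun n => ?_
  rcases n with _ | n
  · simp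
  · simp only [Nat.add_sub_cancel, pow_succ]
    ring

theorem seriesSum_first_order_relation (θ σ ν1 : ℝ) {a : ℕ → ℝ} (ha0 : a 0 = 0)
    (hrec2 : (2 + θ * ν1) * a 2 - (2 + σ + θ) * a 1 + σ = 0)
    (hrecn : ∀ n : ℕ, 3 ≤ n →
      ((n:ℝ) + θ * ν1) * a n - ((n:ℝ) + σ + θ) * a (n-1) + σ * a (n-2) = 0)
    (hc : SummableOnUnitInterval a) {y : ℝ} (hy : |y| < 1) :
    y * (1 - y) * seriesSum (derivCoeff a) y + θ * ν1 * seriesSum a y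
      - (1 + σ + θ) * y * seriesSum a y + σ * y ^ 2 * seriesSum a y
      = (1 + θ * ν1) * a 1 * y - σ * y ^ 2 := by
  set V := seriesSum a y
  set V' := seriesSum (derivCoeff a) y
  have hV : HasSum (fun n => a n * y ^ n) V := (hc.summable hy).hasSum
  have hV' := hasSum_natCast_mul_mul_pow hc hy
  have hf : HasSum (fun n : ℕ => (n + θ * ν1) * a n * y ^ n) (y * V' + θ * ν1 * V) :=
    (hV'.add (hV.mul_left (θ * ν1))).congr_fun fun n => by ring
  have hg : HasSum (fun n : ℕ => (n + 1 + σ + θ) * a n * y ^ (n + 1))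
      (y * (y * V' + (1 + σ + θ) * V)) :=
    ((hV'.add (hV.mul_left (1 + σ + θ))).mul_left y).congr_fun fun n => by ring
  have hh : HasSum (fun n : ℕ => σ * a n * y ^ (n + 2)) (σ * y ^ 2 * V) :=
    (hV.mul_left (σ * y ^ 2)).congr_fun fun n => by ring
  -- the coefficient of `y ^ (n + 2)` is the recursion at `n + 2`
  have hsum := (((hasSum_nat_add_iff' 2).2 hf).sub ((hasSum_nat_add_iff' 1).2 hg)).add hh
  have hsingle := hsum.unique (hasSum_single 0 fun n hn => by
    obtain ⟨m, rfl⟩ := Nat.exists_eq_add_one_of_ne_zero hn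
    have h := hrecn (m + 1 + 2) (by omega)
    simp only [show m + 1 + 2 - 1 = m + 1 + 1 by omega, show m + 1 + 2 - 2 = m + 1 by omega] at h
    push_cast at h ⊢
    linear_combination y ^ (m + 1 + 2) * h)
  simp only [Finset.sum_range_succ, Finset.sum_range_zero, ha0] at hsingle
  push_cast at hsingle
  linear_combination hsingle + y ^ 2 * hrec2

theorem seriesSum_second_order_relation (θ σ ν1 : ℝ) {a : ℕ → ℝ} (ha0 : a 0 = 0)
    (hrec2 : (2 + θ * ν1) * a 2 - (2 + σ + θ) * a 1 + σ = 0)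
    (hrecn : ∀ n : ℕ, 3 ≤ n →
      ((n:ℝ) + θ * ν1) * a n - ((n:ℝ) + σ + θ) * a (n-1) + σ * a (n-2) = 0)
    (hc : SummableOnUnitInterval a) {y : ℝ} (hy : y ∈ Ioo (0 : ℝ) 1) :
    (1 - y) * seriesSum (derivCoeff (derivCoeff a)) y - (2 + σ + θ) * seriesSum (derivCoeff a) y
      + θ * ν1 * (y * seriesSum (derivCoeff a) y - seriesSum a y) / y ^ 2
      + σ * seriesSum a y + σ * y * seriesSum (derivCoeff a) y = -σ := by
  have hy' : |y| < 1 := by rw [abs_of_pos hy.1]; exact hy.2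
  have hV := hasDerivAt_seriesSum hc hy'
  have hV' := hasDerivAt_seriesSum hc.derivCoeff hy'
  have hid := hasDerivAt_id' y
  -- dividing the first-order relation by `y` leaves a function that is affine on `(0, 1)`
  have hΦ := ((((hid.const_sub 1).mul hV').add ((hV.div hid hy.1.ne').const_mul (θ * ν1))).sub
    (hV.const_mul (1 + σ + θ))).add ((hid.const_mul σ).mul hV)
  have hline : (fun t => (1 - t) * seriesSum (derivCoeff a) t + θ * ν1 * (seriesSum a t / t)
        - (1 + σ + θ) * seriesSum a t + σ * t * seriesSum a t)
      =ᶠ[𝓝 y] fun t => (1 + θ * ν1) * a 1 - σ * t := by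
    filter_upwards [Ioo_mem_nhds hy.1 hy.2] with t ht
    have hrel := seriesSum_first_order_relation θ σ ν1 ha0 hrec2 hrecn hc
      (by rw [abs_of_pos ht.1]; exact ht.2)
    field_simp [ht.1.ne']
    linear_combination hrel
  have hslope := ((hasDerivAt_id' y).const_mul σ).const_sub ((1 + θ * ν1) * a 1)
  have hslope_eq := hΦ.unique (hslope.congr_of_eventuallyEq hline)
  field_simp at hslope_eq ⊢
  linear_combination hslope_eq

theorem hasDerivAt_mul_comp_one_sub {v : ℝ → ℝ} {v' x : ℝ} (h : HasDerivAt v v' (1 - x)) :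
    HasDerivAt (fun t => t * v (1 - t)) (v (1 - x) - x * v') x :=
  ((hasDerivAt_id' x).mul (h.comp_const_sub 1 x)).congr_deriv (by ring)

theorem iteratedDeriv_two_mul_comp_one_sub {v v' v'' : ℝ → ℝ}
    (hv : ∀ y, |y| < 1 → HasDerivAt v (v' y) y)
    (hv' : ∀ y, |y| < 1 → HasDerivAt v' (v'' y) y) {x : ℝ} (hx : |1 - x| < 1) :
    iteratedDeriv 2 (fun t => t * v (1 - t)) x = x * v'' (1 - x) - 2 * v' (1 - x) := by
  have hderiv : deriv (fun t => t * v (1 - t)) =ᶠ[𝓝 x] fun t => v (1 - t) - t * v' (1 - t) := by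
    have hopen : IsOpen {t : ℝ | |1 - t| < 1} :=
      isOpen_lt (continuous_const.sub continuous_id).abs continuous_const
    filter_upwards [hopen.mem_nhds hx] with t ht
    exact (hasDerivAt_mul_comp_one_sub (hv _ ht)).deriv
  rw [iteratedDeriv_succ, iteratedDeriv_one, hderiv.deriv_eq]
  exact (((hv _ hx).comp_const_sub 1 x).sub (hasDerivAt_mul_comp_one_sub (hv' _ hx))).deriv.trans
    (by ring)

theorem stmt18_general (θ σ ν0 ν1 : ℝ) (hνsum : ν0 + ν1 = 1)
    (a : ℕ → ℝ) (ha0 : a 0 = 0)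
    (hrec2 : (2 + θ * ν1) * a 2 - (2 + σ + θ) * a 1 + σ = 0)
    (hrecn : ∀ n : ℕ, 3 ≤ n →
      ((n:ℝ) + θ * ν1) * a n - ((n:ℝ) + σ + θ) * a (n-1) + σ * a (n-2) = 0)
    (hconv : ∀ x ∈ Set.Ioo (0:ℝ) 1, Summable (fun n : ℕ => a n * (1-x)^n))
    (ψ : ℝ → ℝ) (hψ : ∀ x, ψ x = x * ∑' n : ℕ, a n * (1-x)^n) :
    ∀ x ∈ Set.Ioo (0:ℝ) 1,
      x * (1-x) * iteratedDeriv 2 ψ x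
        + ((1-x) * θ * ν0 - x * θ * ν1 + (1-x) * x * σ) * deriv ψ x
        - (θ * ν1 * x / (1-x) + θ * ν0 * (1-x) / x) * ψ x
        + σ * x * (1-x) = 0 := by
  intro x hx
  have hc : SummableOnUnitInterval a := fun r hr => by
    simpa using hconv (1 - r) ⟨by linarith [hr.2], by linarith [hr.1]⟩
  obtain rfl : ψ = fun t => t * seriesSum a (1 - t) := funext hψ
  have hy : 1 - x ∈ Ioo (0 : ℝ) 1 := ⟨by linarith [hx.2], by linarith [hx.1]⟩
  have hy' : |1 - x| < 1 := by rw [abs_of_pos hy.1]; exact hy.2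
  rw [iteratedDeriv_two_mul_comp_one_sub (fun y hy => hasDerivAt_seriesSum hc hy)
      (fun y hy => hasDerivAt_seriesSum hc.derivCoeff hy) hy',
    (hasDerivAt_mul_comp_one_sub (hasDerivAt_seriesSum hc hy')).deriv,
    show ν0 = 1 - ν1 by linarith]
  have hrel := seriesSum_second_order_relation θ σ ν1 ha0 hrec2 hrecn hc hy
  have hx0 := hx.1.ne'
  have hy0 := hy.1.ne'
  field_simp at hrel ⊢
  linear_combination x * hrel

/-- If the coefficients `a_n` satisfy Fearnhead's recursion, then
`ψ(x) = x·∑_{n≥1} a_n (1-x)^n` satisfies Taylor's second-order ODE on `(0,1)`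
(the power series in `(1-x)` converges on `(0,1)` by assumption, so all formal
manipulations are justified). -/
theorem stmt18 (θ σ ν0 ν1 : ℝ) (hθ : 0 < θ) (hσ : 0 ≤ σ)
    (hν0 : ν0 ∈ Set.Ioo (0:ℝ) 1) (hν1 : ν1 ∈ Set.Ioo (0:ℝ) 1) (hνsum : ν0 + ν1 = 1)
    (a : ℕ → ℝ) (ha0 : a 0 = 0)
    (hrec2 : (2 + θ * ν1) * a 2 - (2 + σ + θ) * a 1 + σ = 0)
    (hrecn : ∀ n : ℕ, 3 ≤ n →
      ((n:ℝ) + θ * ν1) * a n - ((n:ℝ) + σ + θ) * a (n-1) + σ * a (n-2) = 0)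
    (hconv : ∀ x ∈ Set.Ioo (0:ℝ) 1, Summable (fun n : ℕ => a n * (1-x)^n))
    (ψ : ℝ → ℝ) (hψ : ∀ x, ψ x = x * ∑' n : ℕ, a n * (1-x)^n) :
    ∀ x ∈ Set.Ioo (0:ℝ) 1,
      x * (1-x) * iteratedDeriv 2 ψ x
        + ((1-x) * θ * ν0 - x * θ * ν1 + (1-x) * x * σ) * deriv ψ x
        - (θ * ν1 * x / (1-x) + θ * ν0 * (1-x) / x) * ψ x
        + σ * x * (1-x) = 0 :=
  stmt18_general θ σ ν0 ν1 hνsum a ha0 hrec2 hrecn hconv ψ hψ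
end
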